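/- arXiv:2303.09691 — 3 statements merged into one kernel-verified Lean document; each statement's English description precedes it below -/
import Mathlib

section
/- On a finite-dimensional normed space ℝⁿ, every strongly positive bounded linear operator with respect to a k-cone C is strongly focusing with respect to C: there exists κ > 0 such that every unit vector in R(C) has distance at least κ from the complement of C. -/
/-!
Normalise: every unit vector of `R '' C` is `‖R u‖⁻¹ • R u` for some unit vector `u ∈ C`.
On the compact set `C ∩ sphere 0 1` the map `u ↦ ‖R u‖⁻¹ • R u` is continuous (since `R u ≠ 0`,
as `0 ∉ interior C`) and takes values in `interior C`, where the distance to `Cᶜ` is positive.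
A continuous positive function on a compact set is bounded below by a positive constant.
-/

open Metric Set Filter Topology Pointwise

section Cone

variable {E : Type*} [AddCommGroup E] [Module ℝ E] {C : Set E}

theorem zero_notMem_interior_of_forall_smul_mem [TopologicalSpace E] [ContinuousSMul ℝ E]
    (hC : ∀ l : ℝ, ∀ v ∈ C, l • v ∈ C) (hCne : C ≠ univ) : (0 : E) ∉ interior C := by
  intro h0
  refine hCne (eq_univ_of_forall fun v ↦ ?_)
  have hsmul : Tendsto (fun t : ℝ ↦ t • v) (𝓝[≠] 0) (𝓝 0) :=
    ((continuous_id.smul continuous_const).tendsto' 0 0 (zero_smul ℝ v)).mono_left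
      nhdsWithin_le_nhds
  obtain ⟨t, htv, ht⟩ :=
    ((hsmul.eventually (mem_interior_iff_mem_nhds.mp h0)).and self_mem_nhdsWithin).exists
  simpa [smul_smul, inv_mul_cancel₀ (show t ≠ 0 from ht)] using hC t⁻¹ _ htv

theorem smul_mem_interior_of_forall_smul_mem [TopologicalSpace E] [ContinuousConstSMul ℝ E]
    (hC : ∀ l : ℝ, ∀ v ∈ C, l • v ∈ C) {c : ℝ} (hc : c ≠ 0) {v : E} (hv : v ∈ interior C) :
    c • v ∈ interior C := by
  have hcC : c • C ⊆ C := by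
    rintro _ ⟨w, hw, rfl⟩
    exact hC c w hw
  exact interior_mono hcC ((interior_smul₀ hc C).symm ▸ smul_mem_smul_set hv)

end Cone

theorem infDist_compl_pos_of_mem_interior {X : Type*} [PseudoMetricSpace X] {C : Set X}
    (hCne : C ≠ univ) {v : X} (hv : v ∈ interior C) : 0 < infDist v Cᶜ := by
  rwa [← infDist_pos_iff_notMem_closure (nonempty_compl.mpr hCne), closure_compl, mem_compl_iff,
    not_not]

section Normed

variable {E : Type*} [NormedAddCommGroup E] [NormedSpace ℝ E] {C : Set E}

theorem exists_mem_sphere_inv_norm_smul_eq (hC : ∀ l : ℝ, ∀ v ∈ C, l • v ∈ C)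
    (R : E →ₗ[ℝ] E) {v : E} (hv : v ∈ R '' C) (hv1 : ‖v‖ = 1) :
    ∃ u ∈ C ∩ sphere 0 1, ‖R u‖⁻¹ • R u = v := by
  obtain ⟨w, hwC, rfl⟩ := hv
  have hw : 0 < ‖w‖ := norm_pos_iff.mpr fun h ↦ by simp [h] at hv1
  refine ⟨‖w‖⁻¹ • w, ⟨hC _ w hwC, ?_⟩, ?_⟩
  · simp [norm_smul, hw.ne']
  · simp [norm_smul, hv1, smul_smul, hw.ne']

theorem exists_pos_le_infDist_compl_of_mapsTo_interior [FiniteDimensional ℝ E]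
    (hCcl : IsClosed C) (hC : ∀ l : ℝ, ∀ v ∈ C, l • v ∈ C) (hCne : C ≠ univ) (R : E →ₗ[ℝ] E)
    (hpos : ∀ v ∈ C, v ≠ 0 → R v ∈ interior C) :
    ∃ κ > 0, ∀ v ∈ R '' C, ‖v‖ = 1 → κ ≤ infDist v Cᶜ := by
  have hRint : ∀ u ∈ C ∩ sphere 0 1, R u ∈ interior C := fun u hu ↦
    hpos u hu.1 (ne_zero_of_mem_unit_sphere ⟨u, hu.2⟩)
  have hRne : ∀ u ∈ C ∩ sphere 0 1, R u ≠ 0 := fun u hu h0 ↦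
    zero_notMem_interior_of_forall_smul_mem hC hCne (h0 ▸ hRint u hu)
  have hcont : ContinuousOn (fun u ↦ infDist (‖R u‖⁻¹ • R u) Cᶜ) (C ∩ sphere 0 1) :=
    (continuous_infDist_pt _).comp_continuousOn <|
      (R.continuous_of_finiteDimensional.norm.continuousOn.inv₀ fun u hu ↦
        norm_ne_zero_iff.mpr (hRne u hu)).smul R.continuous_of_finiteDimensional.continuousOn
  obtain ⟨κ, hκ, hκle⟩ := ((isCompact_sphere 0 1).inter_left hCcl).exists_forall_le' hcont
    fun u hu ↦ infDist_compl_pos_of_mem_interior hCne <|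
      smul_mem_interior_of_forall_smul_mem hC (inv_ne_zero (norm_ne_zero_iff.mpr (hRne u hu)))
        (hRint u hu)
  refine ⟨κ, hκ, fun v hv hv1 ↦ ?_⟩
  obtain ⟨u, hu, rfl⟩ := exists_mem_sphere_inv_norm_smul_eq hC R hv hv1
  exact hκle u hu

end Normed

theorem strongly_positive_is_strongly_focusing_findim_general
    {n : ℕ} (C : Set (EuclideanSpace ℝ (Fin n)))
    (hCcl : IsClosed C)
    (hCcone : ∀ l : ℝ, ∀ v ∈ C, l • v ∈ C)
    (hCproper : C ≠ Set.univ)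
    (R : EuclideanSpace ℝ (Fin n) →ₗ[ℝ] EuclideanSpace ℝ (Fin n))
    (hpos : ∀ v ∈ C, v ≠ 0 → R v ∈ interior C) :
    ∃ κ > 0, ∀ v ∈ R '' C, ‖v‖ = 1 → κ ≤ Metric.infDist v Cᶜ :=
  exists_pos_le_infDist_compl_of_mapsTo_interior hCcl hCcone hCproper R hpos

/-- On a finite-dimensional space, every strongly positive linear operator with
respect to a `k`-cone `C` is strongly focusing with respect to `C`: there exists
`κ > 0` such that every unit vector in `R '' C` has distance at least `κ` from
the complement of `C`. -/
theorem strongly_positive_is_strongly_focusing_findim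
    {n : ℕ} (C : Set (EuclideanSpace ℝ (Fin n))) (k : ℕ)
    (hCcl : IsClosed C)
    (hCcone : ∀ l : ℝ, ∀ v ∈ C, l • v ∈ C)
    (hrank₁ : ∃ W : Submodule ℝ (EuclideanSpace ℝ (Fin n)),
        Module.finrank ℝ W = k ∧ (W : Set (EuclideanSpace ℝ (Fin n))) ⊆ C)
    (hrank₂ : ∀ W : Submodule ℝ (EuclideanSpace ℝ (Fin n)),
        (W : Set (EuclideanSpace ℝ (Fin n))) ⊆ C → Module.finrank ℝ W ≤ k)
    (hCproper : C ≠ Set.univ)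
    (R : EuclideanSpace ℝ (Fin n) →ₗ[ℝ] EuclideanSpace ℝ (Fin n))
    (hpos : ∀ v ∈ C, v ≠ 0 → R v ∈ interior C) :
    ∃ κ > 0, ∀ v ∈ R '' C, ‖v‖ = 1 → κ ≤ Metric.infDist v Cᶜ :=
  strongly_positive_is_strongly_focusing_findim_general C hCcl hCcone hCproper R hpos
end

section
/- Let X = E ⊕ F be a direct sum decomposition of a Banach space with E finite-dimensional, P the bounded projection onto E along F, and Q = I − P. Suppose E∖{0} ⊆ Int C and F ∩ C = {0} for a closed cone C of rank k = dim E. Then there exists a constant C₁ > 0 such that every nonzero v ∈ X with ‖P v‖ ≥ C₁ ‖Q v‖ lies in Int C. -/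
open Pointwise Metric

/-! The unit sphere of the finite-dimensional space `E` is a compact subset of the open set
`interior C`, so some closed `δ`-neighbourhood of it still lies in `interior C`. If
`‖v - P v‖ ≤ δ ‖P v‖`, then `v / ‖P v‖` is within `δ` of the unit vector `P v / ‖P v‖ ∈ E`,
hence lies in `interior C`, and so does `v`, since the interior of a cone is a cone.
Thus `C₁ = δ⁻¹` works. -/

theorem smul_mem_interior_of_forall_smul_mem_s4 {G₀ α : Type*} [GroupWithZero G₀] [MulAction G₀ α]
    [TopologicalSpace α] [ContinuousConstSMul G₀ α] {s : Set α}
    (hs : ∀ c : G₀, ∀ x ∈ s, c • x ∈ s) {c : G₀} (hc : c ≠ 0) {x : α} (hx : x ∈ interior s) :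
    c • x ∈ interior s :=
  interior_mono (Set.smul_set_subset_iff.2 (hs c)) <| by
    rw [interior_smul₀ hc]
    exact Set.smul_mem_smul_set hx

theorem Submodule.exists_pos_forall_norm_sub_le_mul_norm_mem {X : Type*} [NormedAddCommGroup X]
    [NormedSpace ℝ X] (E : Submodule ℝ X) [FiniteDimensional ℝ E] {U : Set X} (hU : IsOpen U)
    (hUsmul : ∀ c : ℝ, 0 < c → ∀ y ∈ U, c • y ∈ U) (hEU : (E : Set X) \ {0} ⊆ U) :
    ∃ δ > 0, ∀ x ∈ E, x ≠ 0 → ∀ y : X, ‖y - x‖ ≤ δ * ‖x‖ → y ∈ U := by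
  set S : Set X := (↑) '' sphere (0 : E) 1
  have hS : IsCompact S := (isCompact_sphere (0 : E) 1).image continuous_subtype_val
  have hSU : S ⊆ U := by
    rintro _ ⟨x, hx, rfl⟩
    exact hEU ⟨x.2, by simpa [← norm_eq_zero] using ne_zero_of_mem_sphere one_ne_zero ⟨x, hx⟩⟩
  obtain ⟨δ, hδ, hδU⟩ := hS.exists_cthickening_subset_open hU hSU
  refine ⟨δ, hδ, fun x hxE hx y hxy => ?_⟩
  have hx' : 0 < ‖x‖ := norm_pos_iff.2 hx
  have hunit : ‖x‖⁻¹ • x ∈ S :=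
    ⟨⟨_, E.smul_mem _ hxE⟩, by simp [norm_smul, hx'.ne'], rfl⟩
  have hclose : dist (‖x‖⁻¹ • y) (‖x‖⁻¹ • x) ≤ δ := by
    rw [dist_eq_norm, ← smul_sub, norm_smul, norm_inv, norm_norm, inv_mul_le_iff₀ hx', mul_comm]
    exact hxy
  simpa [smul_smul, hx'.ne'] using
    hUsmul ‖x‖ hx' _ (hδU (mem_cthickening_of_dist_le _ _ δ S hunit hclose))

theorem projection_ratio_implies_interior_general
    {X : Type*} [NormedAddCommGroup X] [NormedSpace ℝ X]
    (C : Set X)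
    (hCcone : ∀ l : ℝ, ∀ v ∈ C, l • v ∈ C)
    (k : ℕ) (hk : 1 ≤ k)
    (E : Submodule ℝ X)
    (hEdim : Module.finrank ℝ E = k)
    (hEC : (E : Set X) \ {0} ⊆ interior C)
    (P : X →L[ℝ] X)
    (hPE : ∀ v : X, P v ∈ E) :
    ∃ C₁ > 0, ∀ v : X, v ≠ 0 → C₁ * ‖v - P v‖ ≤ ‖P v‖ → v ∈ interior C := by
  have : FiniteDimensional ℝ E := .of_finrank_pos (by omega)
  obtain ⟨δ, hδ, hδC⟩ := E.exists_pos_forall_norm_sub_le_mul_norm_mem isOpen_interior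
    (fun c hc _ ↦ smul_mem_interior_of_forall_smul_mem_s4 hCcone hc.ne') hEC
  refine ⟨δ⁻¹, inv_pos.2 hδ, fun v hv hle => ?_⟩
  rw [inv_mul_le_iff₀ hδ] at hle
  have hPv : P v ≠ 0 := by
    rintro hPv
    simp [hPv, hv] at hle
  exact hδC _ (hPE v) hPv v hle

/-- Let `X = E ⊕ F` with `E` finite dimensional of dimension `k`, `P` the bounded
projection onto `E` along `F` and `Q = I - P`.  If `E \ {0} ⊆ interior C` and
`F ∩ C = {0}` for a closed cone `C` of rank `k`, then there is `C₁ > 0` such that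
every nonzero `v` with `‖P v‖ ≥ C₁ ‖Q v‖` lies in the interior of `C`. -/
theorem projection_ratio_implies_interior
    {X : Type*} [NormedAddCommGroup X] [NormedSpace ℝ X] [CompleteSpace X]
    (C : Set X) (hCcl : IsClosed C)
    (hCcone : ∀ l : ℝ, ∀ v ∈ C, l • v ∈ C)
    (k : ℕ) (hk : 1 ≤ k)
    (E F : Submodule ℝ X) (hEF : IsCompl E F) (hFcl : IsClosed (F : Set X))
    (hEdim : Module.finrank ℝ E = k)
    (hEC : (E : Set X) \ {0} ⊆ interior C)
    (hFC : (F : Set X) ∩ C = {0})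
    (P : X →L[ℝ] X)
    (hPE : ∀ v : X, P v ∈ E) (hPproj : ∀ v ∈ E, P v = v)
    (hPker : ∀ v : X, v - P v ∈ F) :
    ∃ C₁ > 0, ∀ v : X, v ≠ 0 → C₁ * ‖v - P v‖ ≤ ‖P v‖ → v ∈ interior C :=
  projection_ratio_implies_interior_general C hCcone k hk E hEdim hEC P hPE
end

section
/- If Φ is a semiflow monotone with respect to a cone C (x − y ∈ C implies Φ_t(x) − Φ_t(y) ∈ C for all t ≥ 0) and Φ is strongly monotone (x ≠ y and x − y ∈ C imply Φ_t(x) − Φ_t(y) ∈ Int C for t > 0), then the set Q of points with pseudo-ordered positive semiorbit is open in X. -/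
/-!
Strong monotonicity pushes an ordered pair `Φ t₁ x ≠ Φ t₂ x` one unit of time further into
`interior C`, an open condition in `x`. The only way the pushed pair can collapse is if
`0 ∈ interior C`; for a cone this forces `C` to be the whole space, and then being
pseudo-ordered just means `Φ t₁ x ≠ Φ t₂ x`, which is open as well.
-/

open Set

theorem Absorbent.eq_univ_of_smul_mem {𝕜 E : Type*} [NontriviallyNormedField 𝕜]
    [AddCommGroup E] [Module 𝕜 E] {C : Set E} (hC : Absorbent 𝕜 C)
    (hsmul : ∀ l : 𝕜, ∀ v ∈ C, l • v ∈ C) :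
    C = univ := by
  refine eq_univ_of_forall fun x => ?_
  obtain ⟨c, hc, hc₀⟩ :=
    ((absorbent_iff_eventually_nhdsNE_zero.mp hC x).and eventually_mem_nhdsWithin).exists
  rw [← inv_smul_smul₀ hc₀ x]
  exact hsmul c⁻¹ _ hc

theorem eq_univ_of_zero_mem_interior {E : Type*} [AddCommGroup E] [Module ℝ E]
    [TopologicalSpace E] [ContinuousSMul ℝ E] {C : Set E}
    (hsmul : ∀ l : ℝ, ∀ v ∈ C, l • v ∈ C) (h₀ : (0 : E) ∈ interior C) : C = univ :=
  (absorbent_nhds_zero (mem_interior_iff_mem_nhds.mp h₀)).eq_univ_of_smul_mem hsmul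

theorem ContinuousOn.continuous_apply_of_prod_univ {α β γ : Type*} [TopologicalSpace α]
    [TopologicalSpace β] [TopologicalSpace γ] {f : α → β → γ} {s : Set α}
    (hf : ContinuousOn (fun p : α × β => f p.1 p.2) (s ×ˢ univ)) {a : α} (ha : a ∈ s) :
    Continuous (f a) :=
  hf.comp_continuous (Continuous.prodMk_right a) fun b => ⟨ha, mem_univ b⟩

theorem isOpen_setOf_ne_and_sub_mem {α G : Type*} [TopologicalSpace α] [AddGroup G]
    [TopologicalSpace G] [ContinuousSub G] [T1Space G] {f g : α → G} (hf : Continuous f)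
    (hg : Continuous g) {U : Set G} (hU : IsOpen U) :
    IsOpen {a | f a ≠ g a ∧ f a - g a ∈ U} := by
  have hset : {a | f a ≠ g a ∧ f a - g a ∈ U} = (fun a => f a - g a) ⁻¹' (U \ {0}) := by
    ext a
    simp [sub_ne_zero, and_comm]
  rw [hset]
  exact (hU.sdiff isClosed_singleton).preimage (hf.sub hg)

theorem exists_ne_and_sub_mem_interior {X : Type*} [AddCommGroup X] [Module ℝ X]
    [TopologicalSpace X] [ContinuousSMul ℝ X]
    {C : Set X} (hCcone : ∀ l : ℝ, ∀ v ∈ C, l • v ∈ C) {Φ : ℝ → X → X}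
    (hsemi : ∀ t s : ℝ, 0 ≤ t → 0 ≤ s → ∀ x : X, Φ t (Φ s x) = Φ (t + s) x)
    (hsmono : ∀ x y : X, x ≠ y → x - y ∈ C → ∀ t : ℝ, 0 < t →
      Φ t x - Φ t y ∈ interior C)
    {x : X} {t₁ t₂ : ℝ} (ht₁ : 0 ≤ t₁) (ht₂ : 0 ≤ t₂) (hne : Φ t₁ x ≠ Φ t₂ x)
    (hmem : Φ t₁ x - Φ t₂ x ∈ C) :
    ∃ s₁ : ℝ, 0 ≤ s₁ ∧ ∃ s₂ : ℝ, 0 ≤ s₂ ∧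
      Φ s₁ x ≠ Φ s₂ x ∧ Φ s₁ x - Φ s₂ x ∈ interior C := by
  by_cases h₀ : (0 : X) ∈ interior C
  · rw [eq_univ_of_zero_mem_interior hCcone h₀, interior_univ]
    exact ⟨t₁, ht₁, t₂, ht₂, hne, mem_univ _⟩
  · have hpushed : Φ (1 + t₁) x - Φ (1 + t₂) x ∈ interior C := by
      rw [← hsemi 1 t₁ zero_le_one ht₁, ← hsemi 1 t₂ zero_le_one ht₂]
      exact hsmono _ _ hne hmem 1 one_pos
    refine ⟨1 + t₁, by linarith, 1 + t₂, by linarith, fun heq => h₀ ?_, hpushed⟩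
    rwa [heq, sub_self] at hpushed

theorem pseudo_ordered_set_is_open_general
    {X : Type*} [NormedAddCommGroup X] [NormedSpace ℝ X]
    (C : Set X)
    (hCcone : ∀ l : ℝ, ∀ v ∈ C, l • v ∈ C)
    (Φ : ℝ → X → X)
    (hsemi : ∀ t s : ℝ, 0 ≤ t → 0 ≤ s → ∀ x : X, Φ t (Φ s x) = Φ (t + s) x)
    (hcont : ContinuousOn (fun p : ℝ × X => Φ p.1 p.2) (Set.Ici (0:ℝ) ×ˢ Set.univ))
    (hsmono : ∀ x y : X, x ≠ y → x - y ∈ C → ∀ t : ℝ, 0 < t →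
      Φ t x - Φ t y ∈ interior C) :
    IsOpen {x : X | ∃ t₁ : ℝ, 0 ≤ t₁ ∧ ∃ t₂ : ℝ, 0 ≤ t₂ ∧
      Φ t₁ x ≠ Φ t₂ x ∧ Φ t₁ x - Φ t₂ x ∈ C} := by
  rw [isOpen_iff_mem_nhds]
  rintro x ⟨t₁, ht₁, t₂, ht₂, hne, hmem⟩
  obtain ⟨s₁, hs₁, s₂, hs₂, hx⟩ :=
    exists_ne_and_sub_mem_interior hCcone hsemi hsmono ht₁ ht₂ hne hmem
  have hopen : IsOpen {y | Φ s₁ y ≠ Φ s₂ y ∧ Φ s₁ y - Φ s₂ y ∈ interior C} :=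
    isOpen_setOf_ne_and_sub_mem (hcont.continuous_apply_of_prod_univ hs₁)
      (hcont.continuous_apply_of_prod_univ hs₂) isOpen_interior
  exact Filter.mem_of_superset (hopen.mem_nhds hx) fun y ⟨hne, hy⟩ =>
    ⟨s₁, hs₁, s₂, hs₂, hne, interior_subset hy⟩

/-- If `Φ` is a continuous semiflow monotone with respect to a closed solid cone
`C` and strongly monotone (`x ≠ y` and `x - y ∈ C` imply
`Φ t x - Φ t y ∈ interior C` for `t > 0`), then the set `Q` of points with
pseudo-ordered positive semiorbit is open. -/
theorem pseudo_ordered_set_is_open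
    {X : Type*} [NormedAddCommGroup X] [NormedSpace ℝ X]
    (C : Set X) (hCcl : IsClosed C) (hCint : (interior C).Nonempty)
    (hCcone : ∀ l : ℝ, ∀ v ∈ C, l • v ∈ C)
    (Φ : ℝ → X → X)
    (hΦ0 : ∀ x : X, Φ 0 x = x)
    (hsemi : ∀ t s : ℝ, 0 ≤ t → 0 ≤ s → ∀ x : X, Φ t (Φ s x) = Φ (t + s) x)
    (hcont : ContinuousOn (fun p : ℝ × X => Φ p.1 p.2) (Set.Ici (0:ℝ) ×ˢ Set.univ))
    (hmono : ∀ x y : X, x - y ∈ C → ∀ t : ℝ, 0 ≤ t → Φ t x - Φ t y ∈ C)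
    (hsmono : ∀ x y : X, x ≠ y → x - y ∈ C → ∀ t : ℝ, 0 < t →
      Φ t x - Φ t y ∈ interior C) :
    IsOpen {x : X | ∃ t₁ : ℝ, 0 ≤ t₁ ∧ ∃ t₂ : ℝ, 0 ≤ t₂ ∧
      Φ t₁ x ≠ Φ t₂ x ∧ Φ t₁ x - Φ t₂ x ∈ C} :=
  pseudo_ordered_set_is_open_general C hCcone Φ hsemi hcont hsmono
end
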